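/- arXiv:0904.2632 — 5 statements merged into one kernel-verified Lean document; each statement's English description precedes it below -/
import Mathlib

section
/- Let L be a polytope in ℝⁿ, G an affine subspace of ℝⁿ with direction G₀, and x ∈ L ∩ G. Then the orthogonal projection onto G₀ of the normal cone N(L,x) equals the normal cone of L ∩ G at x taken relative to G: P_{G₀} N(L,x) = N_G(L ∩ G, x). -/
/-!
For `⊆`: the projection onto `G₀` is self-adjoint and fixes `z - x` whenever `z ∈ G`.

For `⊇`, let `T` be the cone generated by `s - x`. A relative normal vector `u ∈ G₀` is
nonpositive on `T ∩ G₀`, since every direction of `T` points from `x` into `L`; we need `v`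
nonpositive on `T` with `v - u ⊥ G₀`. If `u ≠ 0`, then `u` lies outside the cone
`T + (G₀ ∩ u⊥)` (as `⟪u - g, u⟫ = ‖u‖² > 0` for `g ⊥ u`), which is finitely generated and hence closed (by the conic Carathéodory
theorem). Separating `u` from it gives `y` that is nonnegative on `T`, vanishes on `G₀ ∩ u⊥` and
has `⟪u, y⟫ < 0`; then `v = (‖u‖² / ⟪u, y⟫) • y` works.
-/

open scoped RealInnerProductSpace

namespace PointedCone

section Module

variable {E : Type*} [AddCommGroup E] [Module ℝ E]

lemma mem_hull_finset_iff {s : Finset E} {x : E} :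
    x ∈ hull ℝ (s : Set E) ↔
      ∃ c : E → ℝ, (∀ y ∈ s, 0 ≤ c y) ∧ ∑ y ∈ s, c y • y = x := by
  constructor
  · intro hx
    obtain ⟨f, -, rfl⟩ := Submodule.mem_span_finset.1 hx
    exact ⟨fun y => f y, fun y _ => (f y).2, rfl⟩
  · rintro ⟨c, hc, rfl⟩
    exact Submodule.sum_mem _ fun y hy => smul_mem _ (hc y hy) (subset_hull hy)

lemma mem_hull_erase_of_not_linearIndepOn [DecidableEq E] {s : Finset E} {x : E}
    (hs : ¬LinearIndepOn ℝ id (s : Set E)) (hx : x ∈ hull ℝ (s : Set E)) :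
    ∃ j ∈ s, x ∈ hull ℝ (s.erase j : Set E) := by
  obtain ⟨c, hc, rfl⟩ := mem_hull_finset_iff.1 hx
  obtain ⟨μ, hμ, j₀, hj₀, hμj₀⟩ := not_linearIndepOn_finset_iff.1 hs
  simp only [id] at hμ
  wlog hpos : 0 < μ j₀ generalizing μ
  · refine this (-μ) (neg_ne_zero.2 hμj₀) (by simp [hμ]) ?_
    exact neg_pos.2 (lt_of_le_of_ne (not_lt.1 hpos) hμj₀)
  obtain ⟨j, hjP, hjmin⟩ := (s.filter fun i => 0 < μ i).exists_min_image (fun i => c i / μ i)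
    ⟨j₀, Finset.mem_filter.2 ⟨hj₀, hpos⟩⟩
  obtain ⟨hjs, hμj⟩ := Finset.mem_filter.1 hjP
  set τ := c j / μ j
  have hτ : 0 ≤ τ := div_nonneg (hc j hjs) hμj.le
  -- Subtracting `τ • ∑ μ i • i = 0` kills the `j`-th coefficient and keeps the others
  -- nonnegative.
  refine ⟨j, hjs, mem_hull_finset_iff.2 ⟨fun i => c i - τ * μ i, fun i hi => ?_, ?_⟩⟩
  · have his := Finset.mem_of_mem_erase hi
    rcases le_or_gt (μ i) 0 with hμi | hμi
    · nlinarith [hc i his]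
    · have := hjmin i (Finset.mem_filter.2 ⟨his, hμi⟩)
      rw [le_div_iff₀ hμi] at this
      linarith
  · rw [Finset.sum_erase _ (by simp [τ, div_mul_cancel₀ _ hμj.ne'])]
    simp only [sub_smul, Finset.sum_sub_distrib, mul_smul, ← Finset.smul_sum, hμ, smul_zero,
      sub_zero]

theorem exists_linearIndepOn_of_mem_hull {s : Finset E} {x : E} (hx : x ∈ hull ℝ (s : Set E)) :
    ∃ t ⊆ s, LinearIndepOn ℝ id (t : Set E) ∧ x ∈ hull ℝ (t : Set E) := by
  classical
  induction s using Finset.strongInduction with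
  | H s ih =>
    by_cases hs : LinearIndepOn ℝ id (s : Set E)
    · exact ⟨s, subset_rfl, hs, hx⟩
    · obtain ⟨j, hj, hxj⟩ := mem_hull_erase_of_not_linearIndepOn hs hx
      obtain ⟨t, hts, ht, hxt⟩ := ih _ (Finset.erase_ssubset hj) hxj
      exact ⟨t, hts.trans (Finset.erase_subset _ _), ht, hxt⟩

lemma fg_ofSubmodule [FiniteDimensional ℝ E] (S : Submodule ℝ E) : (S : PointedCone ℝ E).FG :=
  (IsNoetherian.noetherian S).restrictScalars

end Module

variable {E : Type*} [NormedAddCommGroup E] [NormedSpace ℝ E]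

lemma isClosed_hull_of_linearIndepOn {s : Finset E} (hs : LinearIndepOn ℝ id (s : Set E)) :
    IsClosed (hull ℝ (s : Set E) : Set E) := by
  let f := Fintype.linearCombination ℝ (fun y : (s : Set E) => (y : E))
  have hf : LinearMap.ker f = ⊥ :=
    LinearMap.ker_eq_bot.2 (linearIndependent_iff_injective_fintypeLinearCombination.1 hs)
  have himage : (hull ℝ (s : Set E) : Set E) = f '' Set.Ici 0 := by
    ext x
    simp only [SetLike.mem_coe, Submodule.mem_span_finset', Set.mem_image, Set.mem_Ici,
      Fintype.linearCombination_apply, f]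
    constructor
    · rintro ⟨c, rfl⟩
      exact ⟨fun i => c i, fun i => (c i).2, rfl⟩
    · rintro ⟨c, hc, rfl⟩
      exact ⟨fun i => ⟨c i, hc i⟩, rfl⟩
  rw [himage]
  exact (f.isClosedEmbedding_of_injective hf).isClosedMap _ isClosed_Ici

theorem isClosed_of_fg {C : PointedCone ℝ E} (hC : C.FG) : IsClosed (C : Set E) := by
  classical
  obtain ⟨s, rfl⟩ := hC
  have hunion : (hull ℝ (s : Set E) : Set E) =
      ⋃ t ∈ s.powerset.filter (fun t : Finset E => LinearIndepOn ℝ id (t : Set E)),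
        (hull ℝ (t : Set E) : Set E) := by
    ext x
    simp only [SetLike.mem_coe, Set.mem_iUnion, Finset.mem_filter, Finset.mem_powerset,
      exists_prop]
    constructor
    · intro hx
      obtain ⟨t, hts, ht, hxt⟩ := exists_linearIndepOn_of_mem_hull hx
      exact ⟨t, ⟨hts, ht⟩, hxt⟩
    · rintro ⟨t, ⟨hts, -⟩, hxt⟩
      exact Submodule.span_mono (Finset.coe_subset.2 hts) hxt
  rw [hunion]
  exact isClosed_biUnion_finset fun t ht =>
    isClosed_hull_of_linearIndepOn (Finset.mem_filter.1 ht).2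

end PointedCone

section NormalCone

variable {E : Type*} [NormedAddCommGroup E] [InnerProductSpace ℝ E]

open PointedCone

lemma inner_nonpos_of_mem_hull_sub_of_mem_direction {L : Set E} (hL : Convex ℝ L)
    {G : AffineSubspace ℝ E} {x u d : E} (hx : x ∈ L ∩ G)
    (hu : ∀ z ∈ L ∩ G, ⟪z - x, u⟫ ≤ 0) (hd : d ∈ hull ℝ ((· - x) '' L))
    (hdG : d ∈ G.direction) : ⟪d, u⟫ ≤ 0 := by
  have hconv : Convex ℝ ((· - x) '' L) := by simpa [sub_eq_neg_add] using hL.translate (-x)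
  -- Since `L - x` is convex, each point of its conic hull is a positive multiple of a point of it.
  have hpointed : (ConvexCone.hull ℝ ((· - x) '' L)).Pointed :=
    ConvexCone.subset_hull ⟨x, hx.1, sub_self x⟩
  have hle : hull ℝ ((· - x) '' L) ≤ (ConvexCone.hull ℝ _).toPointedCone hpointed :=
    Submodule.span_le.2 ConvexCone.subset_hull
  obtain ⟨r, hr, -, ⟨z, hzL, rfl⟩, rfl⟩ := (ConvexCone.mem_hull_of_convex hconv).1 (hle hd)
  dsimp only at hdG ⊢
  have hzG : z ∈ G := by
    simpa using AffineSubspace.vadd_mem_of_mem_direction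
      ((G.direction.smul_mem_iff hr.ne').1 hdG) hx.2
  rw [real_inner_smul_left]
  exact mul_nonpos_of_nonneg_of_nonpos hr.le (hu z ⟨hzL, hzG⟩)

lemma inner_sub_nonpos_of_mem_convexHull {s : Set E} {x v : E}
    (hs : ∀ p ∈ s, ⟪p - x, v⟫ ≤ 0) {z : E} (hz : z ∈ convexHull ℝ s) : ⟪z - x, v⟫ ≤ 0 := by
  have hconv : Convex ℝ {z : E | ⟪z - x, v⟫ ≤ 0} := by
    simp_rw [inner_sub_left, sub_nonpos]
    exact convex_halfSpace_le ((innerₛₗ ℝ).flip v).isLinear _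
  exact convexHull_min hs hconv hz

variable [FiniteDimensional ℝ E]

theorem exists_inner_nonpos_sub_mem_orthogonal {T : PointedCone ℝ E} (hT : T.FG)
    {W : Submodule ℝ E} {u : E} (huW : u ∈ W) (hu : ∀ d ∈ T, d ∈ W → ⟪d, u⟫ ≤ 0) :
    ∃ v, (∀ d ∈ T, ⟪d, v⟫ ≤ 0) ∧ v - u ∈ Wᗮ := by
  rcases eq_or_ne u 0 with rfl | hu0
  · exact ⟨0, fun _ _ => by simp, by simp⟩
  let W' := W ⊓ (ℝ ∙ u)ᗮ
  let K := T ⊔ (W' : PointedCone ℝ E)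
  have hK : IsClosed (K : Set E) := isClosed_of_fg (hT.sup (fg_ofSubmodule W'))
  have huK : u ∉ K := by
    intro h
    obtain ⟨d, hd, g, hg, hdg⟩ := Submodule.mem_sup.1 h
    have hdW : d ∈ W := by
      rw [eq_sub_of_add_eq hdg]
      exact W.sub_mem huW hg.1
    have hgu : ⟪g, u⟫ = 0 := by
      rw [real_inner_comm]
      exact Submodule.mem_orthogonal_singleton_iff_inner_right.1 hg.2
    have := hu d hd hdW
    rw [eq_sub_of_add_eq hdg, inner_sub_left, hgu, sub_zero] at this
    exact hu0 (real_inner_self_nonpos.1 this)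
  obtain ⟨y, hyK, huy⟩ := ProperCone.hyperplane_separation' (⟨K, hK⟩ : ProperCone ℝ E) huK
  have hy : ∀ g ∈ W', ⟪g, y⟫ = 0 := fun g hg =>
    le_antisymm
      (by simpa [inner_neg_left] using hyK (-g) (Submodule.mem_sup_right (W'.neg_mem hg)))
      (hyK g (Submodule.mem_sup_right hg))
  -- Every `g ∈ W` differs from a multiple of `u` by an element of `W'`, on which `y` vanishes.
  have hyW : ∀ g ∈ W, ⟪g, y⟫ = ⟪g, u⟫ / ‖u‖ ^ 2 * ⟪u, y⟫ := by
    intro g hg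
    have hg' : g - (⟪g, u⟫ / ‖u‖ ^ 2) • u ∈ W' := by
      refine ⟨W.sub_mem hg (W.smul_mem _ huW),
        Submodule.mem_orthogonal_singleton_iff_inner_right.2 ?_⟩
      rw [inner_sub_right, real_inner_smul_right, real_inner_self_eq_norm_sq, real_inner_comm,
        div_mul_cancel₀ _ (by positivity), sub_self]
    have := hy _ hg'
    rwa [inner_sub_left, real_inner_smul_left, sub_eq_zero] at this
  refine ⟨(‖u‖ ^ 2 / ⟪u, y⟫) • y, fun d hd => ?_, fun g hg => ?_⟩
  · rw [real_inner_smul_right]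
    exact mul_nonpos_of_nonpos_of_nonneg (div_nonpos_of_nonneg_of_nonpos (sq_nonneg _) huy.le)
      (hyK d (Submodule.mem_sup_left hd))
  · rw [inner_sub_right, real_inner_smul_right, hyW g hg]
    field_simp [huy.ne]
    ring

end NormalCone

theorem projection_of_normalCone
    (n : ℕ) (s : Finset (EuclideanSpace ℝ (Fin n)))
    (G : AffineSubspace ℝ (EuclideanSpace ℝ (Fin n)))
    (L : Set (EuclideanSpace ℝ (Fin n))) (hL : L = convexHull ℝ (↑s : Set (EuclideanSpace ℝ (Fin n))))
    (x : EuclideanSpace ℝ (Fin n)) (hx : x ∈ L ∩ (G : Set (EuclideanSpace ℝ (Fin n)))) :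
    (fun z => (Submodule.orthogonalProjectionOnto G.direction z : EuclideanSpace ℝ (Fin n))) ''
        {u | ∀ z ∈ L, ⟪z - x, u⟫ ≤ 0}
      = {u | u ∈ G.direction ∧ ∀ z ∈ L ∩ (G : Set (EuclideanSpace ℝ (Fin n))), ⟪z - x, u⟫ ≤ 0} := by
  subst hL
  ext u
  simp only [Submodule.coe_orthogonalProjectionOnto_apply, Set.mem_image, Set.mem_ofPred_eq]
  constructor
  · rintro ⟨v, hv, rfl⟩
    refine ⟨G.direction.starProjection_apply_mem v, fun z hz => ?_⟩
    have hzx : z - x ∈ G.direction := by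
      simpa using AffineSubspace.vsub_mem_direction hz.2 hx.2
    rw [← Submodule.inner_starProjection_left_eq_right,
      Submodule.starProjection_eq_self_iff.2 hzx]
    exact hv z hz.1
  · rintro ⟨huG, hu⟩
    let T := PointedCone.hull ℝ ((· - x) '' (s : Set (EuclideanSpace ℝ (Fin n))))
    have hTL : T ≤ PointedCone.hull ℝ ((· - x) '' convexHull ℝ (s : Set _)) :=
      Submodule.span_mono (Set.image_mono (subset_convexHull ℝ _))
    obtain ⟨v, hv, hvu⟩ := exists_inner_nonpos_sub_mem_orthogonal
      (Submodule.fg_span (s.finite_toSet.image _)) huG fun d hd hdG =>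
        inner_nonpos_of_mem_hull_sub_of_mem_direction (convex_convexHull ℝ _) hx hu (hTL hd) hdG
    refine ⟨v, fun z hz => inner_sub_nonpos_of_mem_convexHull (fun p hp => ?_) hz,
      Submodule.eq_starProjection_of_mem_orthogonal huG hvu⟩
    exact hv _ (PointedCone.subset_hull (Set.mem_image_of_mem _ hp))
end

section
/- For a convex set K in ℝⁿ and a point x ∈ K, the polar cone of the normal cone N(K,x) equals the closure of the cone of feasible directions: N(K,x)^* = closure(⋃_{λ>0} λ(K - x)). -/
open scoped RealInnerProductSpace
noncomputable section

/-! The normal cone `N(K,x)` is minus the inner dual of the set of feasible directions, so its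
polar is the double inner dual of that set. For convex `K` the feasible directions form a pointed
convex cone, and by Farkas' lemma the double inner dual of such a cone in a Hilbert space is its
closure. -/

open Set ProperCone
open scoped Pointwise

variable {E : Type*} [NormedAddCommGroup E] [InnerProductSpace ℝ E]

def normalCone (K : Set E) (x : E) : Set E := {u | ∀ z ∈ K, ⟪z - x, u⟫ ≤ 0}

def polar (s : Set E) : Set E := {y | ∀ u ∈ s, ⟪u, y⟫ ≤ 0}

def feasibleDirections (K : Set E) (x : E) : Set E :=
  ⋃ (l : ℝ) (_ : 0 < l), (fun z => l • (z - x)) '' K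

lemma mem_feasibleDirections {K : Set E} {x v : E} :
    v ∈ feasibleDirections K x ↔ ∃ l : ℝ, 0 < l ∧ ∃ z ∈ K, l • (z - x) = v := by
  simp [feasibleDirections]

def feasibleCone (K : Set E) {x : E} (hx : x ∈ K) : PointedCone ℝ E :=
  (ConvexCone.hull ℝ (-x +ᵥ K)).toPointedCone
    (SetLike.mem_coe.1 <| ConvexCone.subset_hull ⟨x, hx, neg_add_cancel x⟩)

lemma Convex.coe_feasibleCone {K : Set E} (hK : Convex ℝ K) {x : E} (hx : x ∈ K) :
    (feasibleCone K hx : Set E) = feasibleDirections K x := by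
  ext v
  refine (ConvexCone.mem_hull_of_convex (hK.vadd (-x))).trans ?_
  rw [mem_feasibleDirections]
  simp [mem_smul_set, mem_vadd_set, neg_add_eq_sub]

variable [CompleteSpace E]

theorem PointedCone.innerDual_innerDual_eq_closure (C : PointedCone ℝ E) :
    (innerDual (innerDual (C : Set E) : Set E) : Set E) = closure (C : Set E) := by
  suffices innerDual (innerDual (C : Set E) : Set E) = Submodule.closure C by rw [this]; rfl
  refine le_antisymm ?_ (Submodule.closure_le.2 fun v hv w hw => by
    simpa [real_inner_comm] using hw hv)
  calc innerDual (innerDual (C : Set E) : Set E)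
      ≤ innerDual (innerDual (Submodule.closure C : Set E) : Set E) := by
        gcongr; exact subset_closure
    _ = Submodule.closure C := innerDual_innerDual _

lemma normalCone_eq_neg_innerDual (K : Set E) (x : E) :
    normalCone K x = -(innerDual (feasibleDirections K x) : Set E) := by
  ext u
  simp only [normalCone, mem_ofPred_eq, mem_neg, SetLike.mem_coe, mem_innerDual]
  constructor
  · rintro h _ hv
    obtain ⟨l, hl, z, hz, rfl⟩ := mem_feasibleDirections.1 hv
    rw [real_inner_smul_left, inner_neg_right]
    exact mul_nonneg hl.le (neg_nonneg.2 (h z hz))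
  · intro h z hz
    simpa using h (mem_feasibleDirections.2 ⟨1, one_pos, z, hz, one_smul ℝ _⟩)

lemma polar_neg (s : Set E) : polar (-s) = innerDual s := by
  ext y
  simp only [polar, mem_ofPred_eq, mem_neg, SetLike.mem_coe, mem_innerDual]
  constructor
  · intro h v hv
    simpa using h (-v) (by simpa using hv)
  · intro h u hu
    simpa using h hu

theorem polar_normalCone_eq_closure_cone_of_feasible_directions
    (n : ℕ) (K : Set (EuclideanSpace ℝ (Fin n))) (hK : Convex ℝ K)
    (x : EuclideanSpace ℝ (Fin n)) (hx : x ∈ K) :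
    {y | ∀ u ∈ {u : EuclideanSpace ℝ (Fin n) | ∀ z ∈ K, ⟪z - x, u⟫ ≤ 0}, ⟪u, y⟫ ≤ 0}
      = closure (⋃ (l : ℝ) (_ : 0 < l), (fun z => l • (z - x)) '' K) := by
  change polar (normalCone K x) = closure (feasibleDirections K x)
  rw [normalCone_eq_neg_innerDual, polar_neg, ← hK.coe_feasibleCone hx]
  exact (feasibleCone K hx).innerDual_innerDual_eq_closure
end
end

section
/- Let L be a polytope contained in an affine subspace G of ℝⁿ with direction G₀. Then the union of the relative normal cones N_G(L, v) over all vertices v of L equals G₀. -/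
open scoped RealInnerProductSpace

/-- The maximizers of `l` on `s` form a nonempty compact exposed face of `s`; an extreme point of
that face (Krein–Milman) is an extreme point of `s`. -/
theorem IsCompact.exists_mem_extremePoints_isMaxOn {E : Type*} [AddCommGroup E] [Module ℝ E]
    [TopologicalSpace E] [T2Space E] [IsTopologicalAddGroup E] [ContinuousSMul ℝ E]
    [LocallyConvexSpace ℝ E] {s : Set E} (hs : IsCompact s) (hne : s.Nonempty)
    (l : StrongDual ℝ E) : ∃ x ∈ s.extremePoints ℝ, IsMaxOn l s x := by
  have hface : IsExposed ℝ s (l.toExposed s) := ContinuousLinearMap.toExposed.isExposed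
  obtain ⟨y, hy, hmax⟩ := hs.exists_isMaxOn hne l.continuous.continuousOn
  obtain ⟨x, hx⟩ := (hface.isCompact hs).extremePoints_nonempty ⟨y, hy, hmax⟩
  exact ⟨x, hface.isExtreme.extremePoints_subset_extremePoints hx, hx.1.2⟩

theorem IsCompact.exists_mem_extremePoints_forall_inner_sub_nonpos {E : Type*}
    [NormedAddCommGroup E] [InnerProductSpace ℝ E] {s : Set E} (hs : IsCompact s)
    (hne : s.Nonempty) (u : E) : ∃ v ∈ s.extremePoints ℝ, ∀ z ∈ s, ⟪z - v, u⟫ ≤ 0 := by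
  obtain ⟨v, hv, hmax⟩ := hs.exists_mem_extremePoints_isMaxOn hne (innerSL ℝ u)
  refine ⟨v, hv, fun z hz => ?_⟩
  have hzv : ⟪u, z⟫ ≤ ⟪u, v⟫ := hmax hz
  rw [inner_sub_left, real_inner_comm u z, real_inner_comm u v]
  linarith

theorem iUnion_relNormalCone_vertices_eq_direction_general
    (n : ℕ) (s : Finset (EuclideanSpace ℝ (Fin n))) (hs : s.Nonempty)
    (G : AffineSubspace ℝ (EuclideanSpace ℝ (Fin n)))
    (L : Set (EuclideanSpace ℝ (Fin n)))
    (hL : L = convexHull ℝ (↑s : Set (EuclideanSpace ℝ (Fin n)))) :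
    (⋃ v ∈ Set.extremePoints ℝ L,
        {u | u ∈ G.direction ∧ ∀ z ∈ L, ⟪z - v, u⟫ ≤ 0})
      = (G.direction : Set (EuclideanSpace ℝ (Fin n))) := by
  subst hL
  ext u
  simp only [Set.mem_iUnion, Set.mem_ofPred_eq, exists_prop, SetLike.mem_coe]
  refine ⟨fun ⟨_, _, hu, _⟩ => hu, fun hu => ?_⟩
  obtain ⟨v, hv, hnormal⟩ :=
    (s.finite_toSet.isCompact_convexHull ℝ).exists_mem_extremePoints_forall_inner_sub_nonpos
      hs.to_set.convexHull u
  exact ⟨v, hv, hu, hnormal⟩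

theorem iUnion_relNormalCone_vertices_eq_direction
    (n : ℕ) (s : Finset (EuclideanSpace ℝ (Fin n))) (hs : s.Nonempty)
    (G : AffineSubspace ℝ (EuclideanSpace ℝ (Fin n)))
    (L : Set (EuclideanSpace ℝ (Fin n)))
    (hL : L = convexHull ℝ (↑s : Set (EuclideanSpace ℝ (Fin n))))
    (hLG : L ⊆ (G : Set (EuclideanSpace ℝ (Fin n)))) :
    (⋃ v ∈ Set.extremePoints ℝ L,
        {u | u ∈ G.direction ∧ ∀ z ∈ L, ⟪z - v, u⟫ ≤ 0})
      = (G.direction : Set (EuclideanSpace ℝ (Fin n))) :=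
  iUnion_relNormalCone_vertices_eq_direction_general n s hs G L hL
end

section
/- For any d-dimensional linear subspace E ⊆ ℝⁿ (1 ≤ d ≤ n-1), the d-dimensional volume of the orthogonal projection of the cross-polytope B₁ⁿ onto E satisfies Vol_d(P_E B₁ⁿ)^{1/d} ≥ c/√(nd) for a universal constant c > 0 (one may take c so that Vol_d(P_E B₁ⁿ) ≥ Vol_d(n^{-1/2} B₂^d)). -/
/-!
For `v ∈ E` we have `P_E v = v` and `‖v‖₁ ≤ √n ‖v‖₂`, so the ball of radius `n^{-1/2}` of `E`
lies in `P_E B₁ⁿ`. In orthonormal coordinates this ball contains a cube of side `2/√(nd)`.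
The Hausdorff measure `μH[d]` is not normalized, but it dominates the Lebesgue measure of
such a cube, since passing from the Euclidean to the sup norm is `1`-Lipschitz. Hence
`μH[d] (P_E B₁ⁿ) ≥ (2/√(nd))^d`, and `c = 2` works.
-/

open scoped RealInnerProductSpace
open MeasureTheory
noncomputable section

/-- The unit ball of ℓ₁ⁿ. -/
def crossPolytope (n : ℕ) : Set (EuclideanSpace ℝ (Fin n)) :=
  {x | ∑ i, |x i| ≤ 1}

open Metric Module Finset

section

variable {ι : Type*} [Fintype ι]

theorem EuclideanSpace.sum_abs_le_sqrt_card_mul_norm (x : EuclideanSpace ℝ ι) :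
    ∑ i, |x i| ≤ √(Fintype.card ι) * ‖x‖ := by
  rw [EuclideanSpace.norm_eq, ← Real.sqrt_mul (Nat.cast_nonneg _)]
  refine Real.le_sqrt_of_sq_le ?_
  simpa [sq_abs] using sq_sum_le_card_mul_sum_sq (s := univ) (f := fun i => |x i|)

theorem EuclideanSpace.norm_le_sum_abs (x : EuclideanSpace ℝ ι) : ‖x‖ ≤ ∑ i, |x i| := by
  rw [EuclideanSpace.norm_eq, Real.sqrt_le_left (sum_nonneg fun i _ => abs_nonneg _)]
  simpa using sum_sq_le_sq_sum_of_nonneg (s := univ) (f := fun i => |x i|)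
    fun i _ => abs_nonneg _

theorem EuclideanSpace.toLp_image_closedBall_subset (s : ℝ) :
    WithLp.toLp 2 '' closedBall (0 : ι → ℝ) s ⊆
      closedBall (0 : EuclideanSpace ℝ ι) (√(Fintype.card ι) * s) := by
  rintro _ ⟨x, hx, rfl⟩
  rw [mem_closedBall_zero_iff] at hx ⊢
  calc ‖WithLp.toLp 2 x‖ ≤ √(Fintype.card ι) * ‖x‖ := by
        simpa [Real.sqrt_eq_rpow] using
          (PiLp.lipschitzWith_toLp 2 (fun _ : ι => ℝ)).dist_le_mul x 0
    _ ≤ √(Fintype.card ι) * s := by gcongr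

theorem volume_le_hausdorffMeasure_toLp_image (t : Set (ι → ℝ)) :
    volume t ≤ μH[Fintype.card ι] (WithLp.toLp 2 '' t) := by
  simpa [Set.image_image] using
    (PiLp.lipschitzWith_ofLp 2 (fun _ : ι => ℝ)).hausdorffMeasure_image_le
      (d := Fintype.card ι) (by positivity) (WithLp.toLp 2 '' t)

end

theorem isBounded_crossPolytope (n : ℕ) : Bornology.IsBounded (crossPolytope n) :=
  isBounded_closedBall.subset fun x hx =>
    mem_closedBall_zero_iff.2 ((EuclideanSpace.norm_le_sum_abs x).trans hx)

theorem ofReal_pow_le_hausdorffMeasure_closedBall {F : Type*} [NormedAddCommGroup F]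
    [InnerProductSpace ℝ F] [FiniteDimensional ℝ F] [MeasurableSpace F] [BorelSpace F]
    {r : ℝ} (hr : 0 ≤ r) :
    ENNReal.ofReal (2 * r / √(finrank ℝ F)) ^ finrank ℝ F ≤
      μH[finrank ℝ F] (closedBall (0 : F) r) := by
  set k := finrank ℝ F
  have hcube : √(Fintype.card (Fin k)) * (r / √k) ≤ r := by
    rw [Fintype.card_fin, mul_div_assoc']
    exact div_le_of_le_mul₀ (Real.sqrt_nonneg _) hr (by rw [mul_comm])
  calc ENNReal.ofReal (2 * r / √k) ^ k
        = volume (closedBall (0 : Fin k → ℝ) (r / √k)) := by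
        rw [Real.volume_pi_closedBall _ (by positivity), Fintype.card_fin,
          ENNReal.ofReal_pow (by positivity), mul_div_assoc]
    _ ≤ μH[k] (WithLp.toLp 2 '' closedBall (0 : Fin k → ℝ) (r / √k)) := by
        simpa using volume_le_hausdorffMeasure_toLp_image (closedBall (0 : Fin k → ℝ) (r / √k))
    _ ≤ μH[k] (closedBall (0 : EuclideanSpace ℝ (Fin k)) r) :=
        measure_mono ((EuclideanSpace.toLp_image_closedBall_subset _).trans
          (closedBall_subset_closedBall hcube))
    _ = μH[k] (closedBall (0 : F) r) := by
        set e := (stdOrthonormalBasis ℝ F).repr.symm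
        rw [← e.isometry.hausdorffMeasure_image (Or.inl k.cast_nonneg), e.image_closedBall,
          map_zero]

theorem closedBall_subset_image_orthogonalProjection_crossPolytope {n : ℕ}
    (E : Submodule ℝ (EuclideanSpace ℝ (Fin n))) :
    closedBall (0 : E) (1 / √n) ⊆ E.orthogonalProjectionOnto '' crossPolytope n := by
  intro v hv
  refine ⟨v, ?_, E.orthogonalProjectionOnto_mem_subspace_eq_self v⟩
  replace hv : ‖(v : EuclideanSpace ℝ (Fin n))‖ ≤ 1 / √n := mem_closedBall_zero_iff.1 hv
  calc ∑ i, |(v : EuclideanSpace ℝ (Fin n)) i|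
        ≤ √n * ‖(v : EuclideanSpace ℝ (Fin n))‖ := by
        simpa using EuclideanSpace.sum_abs_le_sqrt_card_mul_norm (v : EuclideanSpace ℝ (Fin n))
    _ ≤ √n * (1 / √n) := by gcongr
    _ ≤ 1 := by rw [mul_one_div]; exact div_self_le_one _

theorem le_toReal_rpow_one_div_of_ofReal_pow_le {a : ℝ} {m : ENNReal} {k : ℕ} (ha : 0 ≤ a)
    (hk : k ≠ 0) (hm : m ≠ ⊤) (h : ENNReal.ofReal a ^ k ≤ m) : a ≤ m.toReal ^ ((1 : ℝ) / k) := by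
  have h_real : a ^ k ≤ m.toReal := by
    simpa [ENNReal.toReal_pow, ENNReal.toReal_ofReal ha] using ENNReal.toReal_mono hm h
  calc a = (a ^ k) ^ ((1 : ℝ) / k) := by rw [one_div, Real.pow_rpow_inv_natCast ha hk]
    _ ≤ m.toReal ^ ((1 : ℝ) / k) := by gcongr

theorem volume_of_projection_of_crossPolytope_lower_bound :
    ∃ c > 0, ∀ (n d : ℕ) (E : Submodule ℝ (EuclideanSpace ℝ (Fin n))),
      1 ≤ d → d ≤ n - 1 → Module.finrank ℝ E = d →
      c / Real.sqrt (n * d) ≤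
        ((μH[d] ((fun x => (Submodule.orthogonalProjection E x : EuclideanSpace ℝ (Fin n))) ''
            crossPolytope n)).toReal) ^ ((1 : ℝ) / d) := by
  refine ⟨2, two_pos, fun n d E hd _ hE => ?_⟩
  subst hE
  rw [← Set.image_image Subtype.val,
    isometry_subtype_coe.hausdorffMeasure_image (Or.inl (Nat.cast_nonneg _))]
  set S := E.orthogonalProjectionOnto '' crossPolytope n
  have h_radius : 2 * (1 / √n) / √(finrank ℝ E) = 2 / √(n * finrank ℝ E) := by
    rw [Real.sqrt_mul n.cast_nonneg]
    ring
  have h_lower :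
      ENNReal.ofReal (2 / √(n * finrank ℝ E)) ^ finrank ℝ E ≤ μH[finrank ℝ E] S :=
    h_radius ▸ (ofReal_pow_le_hausdorffMeasure_closedBall (by positivity)).trans
      (measure_mono (closedBall_subset_image_orthogonalProjection_crossPolytope E))
  have h_finite : μH[finrank ℝ E] S ≠ ⊤ :=
    (E.orthogonalProjectionOnto.lipschitz.isBounded_image
      (isBounded_crossPolytope n)).measure_lt_top.ne
  exact le_toReal_rpow_one_div_of_ofReal_pow_le (by positivity) (by omega) h_finite h_lower
end
end

section
/- Let K ⊆ ℝⁿ be an isotropic convex body, H = e_n^⊥, and S(K) its Steiner symmetrization with respect to H. Then L_{S(K)} = σ^{1/n} L_K where σ² = (∫_{S(K)} ⟨x,e_n⟩² dx)/L_K²; in particular L_{S(K)} ≤ L_K. -/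
/-!
Write `x = (y, t)` with `t = ⟪x, eₙ⟫`. Steiner symmetrization replaces every fibre
`{t | (y, t) ∈ K}` by the centred interval of the same length. By Fubini, the moments
`∫ yᵢ yⱼ` therefore do not change, the mixed moments `∫ t yⱼ` vanish because the new fibres are
symmetric, and `∫ t²` can only decrease because among sets of given length the centred interval
minimises `∫ t²`. For isotropic `K` the inertia matrix of `S(K)` is thus
`diag (L², …, L², σ² L²)` with `σ ≤ 1`, whose determinant is `(σ L^(n+1))²`.
-/

open scoped RealInnerProductSpace
open MeasureTheory
noncomputable section

/-- The last standard basis vector `eₙ` of `ℝ^(n+1)`. -/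
def eLast (n : ℕ) : EuclideanSpace ℝ (Fin (n + 1)) := EuclideanSpace.single (Fin.last n) 1

/-- The point obtained from `x` by replacing its `eₙ`-coordinate with `t`. -/
def ptAt (n : ℕ) (x : EuclideanSpace ℝ (Fin (n + 1))) (t : ℝ) :
    EuclideanSpace ℝ (Fin (n + 1)) :=
  x + (t - ⟪x, eLast n⟫) • eLast n

/-- The Steiner symmetrization of `K` with respect to the hyperplane `eₙ^⊥`. -/
def steiner (n : ℕ) (K : Set (EuclideanSpace ℝ (Fin (n + 1)))) :
    Set (EuclideanSpace ℝ (Fin (n + 1))) :=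
  {x | (∃ t, ptAt n x t ∈ K) ∧
    |⟪x, eLast n⟫| ≤ (1 / 2) * (volume {t : ℝ | ptAt n x t ∈ K}).toReal}

/-- The inertia matrix of a set. -/
def inertiaMatrix (n : ℕ) (A : Set (EuclideanSpace ℝ (Fin (n + 1)))) :
    Matrix (Fin (n + 1)) (Fin (n + 1)) ℝ :=
  fun i j => ∫ x in A, ⟪x, EuclideanSpace.single i 1⟫ * ⟪x, EuclideanSpace.single j 1⟫

open Set

-- If `volume C = ∞` then `volume.real C = 0` and the interval degenerates to `{0}`.
theorem setIntegral_sq_Icc_le {C : Set ℝ} (hC : MeasurableSet C)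
    (hint : IntegrableOn (fun t => t ^ 2) C) :
    ∫ t in Icc (-(volume.real C / 2)) (volume.real C / 2), t ^ 2 ≤ ∫ t in C, t ^ 2 := by
  set a := volume.real C / 2
  by_cases hCfin : volume C = ⊤
  · have ha : a = 0 := by simp [a, measureReal_def, hCfin]
    simp only [ha, neg_zero, Icc_self, Measure.restrict_singleton, Real.volume_singleton,
      zero_smul, integral_zero_measure]
    exact setIntegral_nonneg hC fun t _ => sq_nonneg t
  set J := Icc (-a) a
  have hJC : volume J = volume C := by
    rw [Real.volume_Icc, show a - -a = volume.real C by ring, ofReal_measureReal hCfin]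
  have hdiff : volume.real (J \ C) = volume.real (C \ J) := by
    rw [measureReal_def, measureReal_def, measure_sdiff_symm measurableSet_Icc.nullMeasurableSet
      hC.nullMeasurableSet hJC (measure_ne_top_of_subset inter_subset_right hCfin)]
  have hJint : IntegrableOn (fun t : ℝ => t ^ 2) J := (continuous_pow 2).integrableOn_Icc
  -- `J \ C` and `C \ J` have the same length, and `t ^ 2 ≤ a ^ 2` on the first, `≥` on the second.
  have hJ_le : ∫ t in J \ C, t ^ 2 ≤ a ^ 2 * volume.real (C \ J) := by
    rw [← hdiff, mul_comm, ← smul_eq_mul, ← setIntegral_const]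
    refine setIntegral_mono_on (hJint.mono_set sdiff_subset)
      (integrableOn_const (measure_ne_top_of_subset sdiff_subset (hJC ▸ hCfin)))
      (measurableSet_Icc.diff hC) fun t ht => sq_le_sq' ht.1.1 ht.1.2
  have hC_ge : a ^ 2 * volume.real (C \ J) ≤ ∫ t in C \ J, t ^ 2 := by
    refine setIntegral_ge_of_const_le_real (hC.diff measurableSet_Icc)
      (measure_ne_top_of_subset sdiff_subset hCfin) (fun t ht => ?_) (hint.mono_set sdiff_subset)
    have : a ≤ |t| := by
      by_contra h
      exact ht.2 (abs_le.mp (not_le.mp h).le)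
    simpa [sq_abs] using pow_le_pow_left₀ (by positivity) this 2
  have hJ : (∫ t in J ∩ C, t ^ 2) + ∫ t in J \ C, t ^ 2 = ∫ t in J, t ^ 2 :=
    integral_inter_add_sdiff hC hJint
  have hC' : (∫ t in C ∩ J, t ^ 2) + ∫ t in C \ J, t ^ 2 = ∫ t in C, t ^ 2 :=
    integral_inter_add_sdiff measurableSet_Icc hint
  rw [inter_comm] at hC'
  linarith

section Fubini

variable {α β E : Type*} [MeasurableSpace α] [MeasurableSpace β] [NormedAddCommGroup E]
  {μ : Measure α} {ν : Measure β} {S : Set (α × β)} {F : α × β → E}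

theorem ae_integrableOn_fiber [SFinite μ] [SFinite ν] (hS : MeasurableSet S)
    (hF : IntegrableOn F S (μ.prod ν)) :
    ∀ᵐ y ∂ν, IntegrableOn (fun x => F (x, y)) {x | (x, y) ∈ S} μ := by
  filter_upwards [((integrable_indicator_iff hS).2 hF).prod_left_ae] with y hy
  exact (integrable_indicator_iff (f := fun x => F (x, y)) (s := {x | (x, y) ∈ S})
    (measurable_prodMk_right hS)).1 hy

variable [NormedSpace ℝ E]

theorem integral_indicator_prodMk_right (hS : MeasurableSet S) (y : β) :
    ∫ x, S.indicator F (x, y) ∂μ = ∫ x in {x | (x, y) ∈ S}, F (x, y) ∂μ :=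
  integral_indicator (f := fun x => F (x, y)) (s := {x | (x, y) ∈ S})
    (measurable_prodMk_right hS)

variable [SFinite μ] [SFinite ν]

theorem setIntegral_prod_eq_integral_setIntegral_fiber (hS : MeasurableSet S)
    (hF : IntegrableOn F S (μ.prod ν)) :
    ∫ p in S, F p ∂μ.prod ν = ∫ y, ∫ x in {x | (x, y) ∈ S}, F (x, y) ∂μ ∂ν := by
  rw [← integral_indicator hS, integral_prod_symm _ ((integrable_indicator_iff hS).2 hF)]
  simp only [integral_indicator_prodMk_right hS]

theorem integrable_setIntegral_fiber (hS : MeasurableSet S) (hF : IntegrableOn F S (μ.prod ν)) :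
    Integrable (fun y => ∫ x in {x | (x, y) ∈ S}, F (x, y) ∂μ) ν := by
  simpa only [integral_indicator_prodMk_right hS] using
    ((integrable_indicator_iff hS).2 hF).integral_prod_right

end Fubini

section SteinerProd

variable {Y : Type*}

def fiberLength (K : Set (ℝ × Y)) (y : Y) : ℝ := volume.real {t : ℝ | (t, y) ∈ K}

def steinerSymm (K : Set (ℝ × Y)) : Set (ℝ × Y) :=
  {p | (∃ s, (s, p.2) ∈ K) ∧ |p.1| ≤ fiberLength K p.2 / 2}

variable {K : Set (ℝ × Y)} {y : Y}

theorem fiberLength_nonneg : 0 ≤ fiberLength K y := measureReal_nonneg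

theorem fiber_steinerSymm_of_exists (hy : ∃ s, (s, y) ∈ K) :
    {t | (t, y) ∈ steinerSymm K} = Icc (-(fiberLength K y / 2)) (fiberLength K y / 2) := by
  ext t
  simp [steinerSymm, hy, abs_le]

theorem fiber_steinerSymm_of_not_exists (hy : ¬∃ s, (s, y) ∈ K) :
    {t | (t, y) ∈ steinerSymm K} = ∅ := by
  ext t
  simp [steinerSymm, hy]

theorem fiberLength_steinerSymm (K : Set (ℝ × Y)) :
    fiberLength (steinerSymm K) = fiberLength K := by
  funext y
  by_cases hy : ∃ s, (s, y) ∈ K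
  · have h := fiberLength_nonneg (K := K) (y := y)
    rw [fiberLength, fiber_steinerSymm_of_exists hy, Real.volume_real_Icc_of_le (by linarith)]
    ring
  · rw [fiberLength, fiberLength, fiber_steinerSymm_of_not_exists hy,
      (eq_empty_iff_forall_notMem.2 fun s hs => hy ⟨s, hs⟩ : {t : ℝ | (t, y) ∈ K} = ∅)]

theorem measurable_fiberLength [MeasurableSpace Y] (hK : MeasurableSet K) :
    Measurable (fiberLength K) :=
  (measurable_measure_prodMk_right hK).ennreal_toReal

variable [MeasurableSpace Y] {ν : Measure Y} [SFinite ν]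

theorem setIntegral_comp_snd_eq_integral_fiberLength_mul {S : Set (ℝ × Y)} (hS : MeasurableSet S)
    {g : Y → ℝ} (hg : IntegrableOn (fun p => g p.2) S (volume.prod ν)) :
    ∫ p in S, g p.2 ∂volume.prod ν = ∫ y, fiberLength S y * g y ∂ν := by
  rw [setIntegral_prod_eq_integral_setIntegral_fiber hS hg]
  congr with y
  exact setIntegral_const (g y)

theorem setIntegral_steinerSymm_comp_snd (hK : MeasurableSet K)
    (hSK : MeasurableSet (steinerSymm K)) {g : Y → ℝ}
    (hgK : IntegrableOn (fun p => g p.2) K (volume.prod ν))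
    (hgS : IntegrableOn (fun p => g p.2) (steinerSymm K) (volume.prod ν)) :
    ∫ p in steinerSymm K, g p.2 ∂volume.prod ν = ∫ p in K, g p.2 ∂volume.prod ν := by
  rw [setIntegral_comp_snd_eq_integral_fiberLength_mul hSK hgS,
    setIntegral_comp_snd_eq_integral_fiberLength_mul hK hgK, fiberLength_steinerSymm]

theorem setIntegral_steinerSymm_fst_mul (hSK : MeasurableSet (steinerSymm K)) {g : Y → ℝ}
    (hg : IntegrableOn (fun p => p.1 * g p.2) (steinerSymm K) (volume.prod ν)) :
    ∫ p in steinerSymm K, p.1 * g p.2 ∂volume.prod ν = 0 := by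
  rw [setIntegral_prod_eq_integral_setIntegral_fiber hSK hg]
  refine integral_eq_zero_of_ae (.of_forall fun y => ?_)
  by_cases hy : ∃ s, (s, y) ∈ K
  · have ha : 0 ≤ fiberLength K y / 2 := by linarith [fiberLength_nonneg (K := K) (y := y)]
    simp only [fiber_steinerSymm_of_exists hy]
    rw [integral_mul_const, integral_Icc_eq_integral_Ioc, ← intervalIntegral.integral_of_le
      (by linarith), integral_id]
    simp
  · simp [fiber_steinerSymm_of_not_exists hy]

theorem setIntegral_fst_sq_steinerSymm_le (hK : MeasurableSet K)
    (hSK : MeasurableSet (steinerSymm K))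
    (hK2 : IntegrableOn (fun p => p.1 ^ 2) K (volume.prod ν))
    (hS2 : IntegrableOn (fun p => p.1 ^ 2) (steinerSymm K) (volume.prod ν)) :
    ∫ p in steinerSymm K, p.1 ^ 2 ∂volume.prod ν ≤ ∫ p in K, p.1 ^ 2 ∂volume.prod ν := by
  rw [setIntegral_prod_eq_integral_setIntegral_fiber hSK hS2,
    setIntegral_prod_eq_integral_setIntegral_fiber hK hK2]
  refine integral_mono_ae (integrable_setIntegral_fiber hSK hS2)
    (integrable_setIntegral_fiber hK hK2) ?_
  filter_upwards [ae_integrableOn_fiber hK hK2] with y hy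
  by_cases hne : ∃ s, (s, y) ∈ K
  · simp only [fiber_steinerSymm_of_exists hne]
    exact setIntegral_sq_Icc_le (measurable_prodMk_right hK) hy
  · simp only [fiber_steinerSymm_of_not_exists hne, Measure.restrict_empty, integral_zero_measure]
    exact setIntegral_nonneg (measurable_prodMk_right hK) fun t _ => sq_nonneg t

end SteinerProd

section SteinerProdCompact

variable {Y : Type*} [TopologicalSpace Y] {K : Set (ℝ × Y)}

theorem IsCompact.exists_isCompact_superset_steinerSymm (hK : IsCompact K) :
    ∃ C, IsCompact C ∧ steinerSymm K ⊆ C := by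
  obtain ⟨R, hR⟩ := hK.exists_bound_of_continuousOn continuous_fst.continuousOn
  refine ⟨Icc (-R) R ×ˢ (Prod.snd '' K), isCompact_Icc.prod (hK.image continuous_snd), ?_⟩
  rintro ⟨t, y⟩ ⟨⟨s, hs⟩, ht⟩
  have hfiber : {t : ℝ | (t, y) ∈ K} ⊆ Icc (-R) R := fun t ht => abs_le.mp (hR _ ht)
  have hlen : fiberLength K y ≤ R - -R := by
    rw [fiberLength, ← Real.volume_real_Icc_of_le (by linarith [abs_le.mp (hR _ hs)])]
    exact measureReal_mono hfiber measure_Icc_lt_top.ne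
  exact ⟨abs_le.mp (by linarith), ⟨s, y⟩, hs, rfl⟩

variable [T2Space Y] [MeasurableSpace Y] [OpensMeasurableSpace Y]

theorem IsCompact.measurableSet_steinerSymm (hK : IsCompact K) :
    MeasurableSet (steinerSymm K) := by
  have hproj : MeasurableSet (Prod.snd ⁻¹' (Prod.snd '' K) : Set (ℝ × Y)) :=
    (hK.image continuous_snd).measurableSet.preimage measurable_snd
  have hle : MeasurableSet {p : ℝ × Y | |p.1| ≤ fiberLength K p.2 / 2} :=
    measurableSet_le measurable_fst.abs
      (((measurable_fiberLength hK.measurableSet).comp measurable_snd).div_const 2)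
  convert hproj.inter hle using 1
  ext ⟨t, y⟩
  simp [steinerSymm]

theorem IsCompact.integrableOn_steinerSymm {ν : Measure Y} [IsFiniteMeasureOnCompacts ν]
    (hK : IsCompact K) {f : ℝ × Y → ℝ} (hf : Continuous f) :
    IntegrableOn f (steinerSymm K) (volume.prod ν) := by
  obtain ⟨C, hC, hSC⟩ := hK.exists_isCompact_superset_steinerSymm
  exact (hf.continuousOn.integrableOn_compact hC).mono_set hSC

end SteinerProdCompact

theorem inner_single_one_right {ι : Type*} [Fintype ι] [DecidableEq ι] (x : EuclideanSpace ℝ ι)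
    (i : ι) : ⟪x, EuclideanSpace.single i 1⟫ = x i := by
  simp [EuclideanSpace.inner_single_right]

theorem inner_eLast {n : ℕ} (x : EuclideanSpace ℝ (Fin (n + 1))) :
    ⟪x, eLast n⟫ = x (Fin.last n) :=
  inner_single_one_right x _

section SplitLast

def splitLast (n : ℕ) : EuclideanSpace ℝ (Fin (n + 1)) ≃ᵐ ℝ × (Fin n → ℝ) :=
  (MeasurableEquiv.toLp 2 (Fin (n + 1) → ℝ)).symm.trans
    (MeasurableEquiv.piFinSuccAbove (fun _ => ℝ) (Fin.last n))

variable {n : ℕ}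

@[simp]
theorem splitLast_symm_apply_last (p : ℝ × (Fin n → ℝ)) :
    (splitLast n).symm p (Fin.last n) = p.1 := by
  simp [splitLast]

@[simp]
theorem splitLast_symm_apply_castSucc (p : ℝ × (Fin n → ℝ)) (k : Fin n) :
    (splitLast n).symm p k.castSucc = p.2 k := by
  simp [splitLast]

theorem measurePreserving_splitLast_symm : MeasurePreserving (splitLast n).symm :=
  ((volume_preserving_piFinSuccAbove (fun _ : Fin (n + 1) => ℝ) (Fin.last n)).comp
    (EuclideanSpace.volume_preserving_symm_measurableEquiv_toLp (Fin (n + 1)))).symm _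

theorem continuous_splitLast : Continuous (splitLast n) := by
  change Continuous fun x : EuclideanSpace ℝ (Fin (n + 1)) =>
    (x (Fin.last n), fun k => x ((Fin.last n).succAbove k))
  fun_prop

theorem ptAt_splitLast_symm (p : ℝ × (Fin n → ℝ)) (s : ℝ) :
    ptAt n ((splitLast n).symm p) s = (splitLast n).symm (s, p.2) := by
  ext j
  induction j using Fin.lastCases with
  | last => simp [ptAt, eLast, inner_single_one_right]
  | cast k => simp [ptAt, eLast, inner_single_one_right, (Fin.castSucc_lt_last k).ne]

theorem preimage_splitLast_symm_steiner (K : Set (EuclideanSpace ℝ (Fin (n + 1)))) :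
    (splitLast n).symm ⁻¹' steiner n K = steinerSymm ((splitLast n).symm ⁻¹' K) := by
  ext p
  simp [steiner, steinerSymm, fiberLength, ptAt_splitLast_symm, eLast, inner_single_one_right,
    measureReal_def, inv_mul_eq_div]

end SplitLast

section SteinerMoments

variable {n : ℕ} {K : Set (EuclideanSpace ℝ (Fin (n + 1)))}

theorem setIntegral_comp_splitLast_symm (f : EuclideanSpace ℝ (Fin (n + 1)) → ℝ)
    (s : Set (EuclideanSpace ℝ (Fin (n + 1)))) :
    ∫ p in (splitLast n).symm ⁻¹' s, f ((splitLast n).symm p) = ∫ x in s, f x :=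
  measurePreserving_splitLast_symm.setIntegral_preimage_emb
    (splitLast n).symm.measurableEmbedding f s

theorem IsCompact.preimage_splitLast_symm (hK : IsCompact K) :
    IsCompact ((splitLast n).symm ⁻¹' K) := by
  rw [← MeasurableEquiv.image_eq_preimage_symm]
  exact hK.image continuous_splitLast

theorem setIntegral_steiner_castSucc_mul_castSucc (hK : IsCompact K) (i j : Fin n) :
    ∫ x in steiner n K, x i.castSucc * x j.castSucc = ∫ x in K, x i.castSucc * x j.castSucc := by
  have hK' := hK.preimage_splitLast_symm
  have hf : Continuous fun p : ℝ × (Fin n → ℝ) => p.2 i * p.2 j := by fun_prop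
  rw [← setIntegral_comp_splitLast_symm, ← setIntegral_comp_splitLast_symm,
    preimage_splitLast_symm_steiner]
  simp only [splitLast_symm_apply_castSucc]
  exact setIntegral_steinerSymm_comp_snd (g := fun y => y i * y j) hK'.measurableSet
    hK'.measurableSet_steinerSymm (hf.continuousOn.integrableOn_compact hK')
    (hK'.integrableOn_steinerSymm hf)

theorem setIntegral_steiner_last_mul_castSucc (hK : IsCompact K) (j : Fin n) :
    ∫ x in steiner n K, x (Fin.last n) * x j.castSucc = 0 := by
  have hK' := hK.preimage_splitLast_symm
  have hf : Continuous fun p : ℝ × (Fin n → ℝ) => p.1 * p.2 j := by fun_prop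
  rw [← setIntegral_comp_splitLast_symm, preimage_splitLast_symm_steiner]
  simp only [splitLast_symm_apply_castSucc, splitLast_symm_apply_last]
  exact setIntegral_steinerSymm_fst_mul (g := fun y => y j) hK'.measurableSet_steinerSymm
    (hK'.integrableOn_steinerSymm hf)

theorem setIntegral_steiner_inner_eLast_sq_le (hK : IsCompact K) :
    ∫ x in steiner n K, ⟪x, eLast n⟫ ^ 2 ≤ ∫ x in K, ⟪x, eLast n⟫ ^ 2 := by
  have hK' := hK.preimage_splitLast_symm
  have hf : Continuous fun p : ℝ × (Fin n → ℝ) => p.1 ^ 2 := by fun_prop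
  rw [← setIntegral_comp_splitLast_symm, ← setIntegral_comp_splitLast_symm,
    preimage_splitLast_symm_steiner]
  simp only [inner_eLast, splitLast_symm_apply_last]
  exact setIntegral_fst_sq_steinerSymm_le hK'.measurableSet hK'.measurableSet_steinerSymm
    (hf.continuousOn.integrableOn_compact hK') (hK'.integrableOn_steinerSymm hf)

end SteinerMoments

section Isotropic

variable {E : Type*} [NormedAddCommGroup E] [InnerProductSpace ℝ E] [MeasurableSpace E]
  {μ : Measure E} {L : ℝ}

theorem integral_inner_sq_of_isotropic
    (hiso : ∀ θ : E, ‖θ‖ = 1 → ∫ x, ⟪x, θ⟫ ^ 2 ∂μ = L ^ 2) (θ : E) :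
    ∫ x, ⟪x, θ⟫ ^ 2 ∂μ = L ^ 2 * ‖θ‖ ^ 2 := by
  rcases eq_or_ne θ 0 with rfl | hθ
  · simp
  · have h := hiso (‖θ‖⁻¹ • θ) (norm_smul_inv_norm hθ)
    simp only [real_inner_smul_right, mul_pow, integral_const_mul, inv_pow] at h
    rw [inv_mul_eq_iff_eq_mul₀ (by positivity)] at h
    rw [h, mul_comm]

theorem integral_inner_mul_inner_of_isotropic
    (hint : ∀ θ : E, Integrable (fun x => ⟪x, θ⟫ ^ 2) μ)
    (hiso : ∀ θ : E, ‖θ‖ = 1 → ∫ x, ⟪x, θ⟫ ^ 2 ∂μ = L ^ 2) (u v : E) :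
    ∫ x, ⟪x, u⟫ * ⟪x, v⟫ ∂μ = L ^ 2 * ⟪u, v⟫ := by
  have polarization : ∀ x : E, ⟪x, u⟫ * ⟪x, v⟫ = (⟪x, u + v⟫ ^ 2 - ⟪x, u - v⟫ ^ 2) / 4 := by
    intro x
    rw [inner_add_right, inner_sub_right]
    ring
  simp only [polarization, integral_div, integral_sub (hint _) (hint _),
    integral_inner_sq_of_isotropic hiso, norm_add_sq_real, norm_sub_sq_real]
  ring

end Isotropic

section Inertia

variable {n : ℕ} {K : Set (EuclideanSpace ℝ (Fin (n + 1)))} {L : ℝ}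

theorem inertiaMatrix_apply (A : Set (EuclideanSpace ℝ (Fin (n + 1)))) (i j : Fin (n + 1)) :
    inertiaMatrix n A i j = ∫ x in A, x i * x j := by
  simp only [inertiaMatrix, inner_single_one_right]

theorem inertiaMatrix_of_isotropic (hK : IsCompact K)
    (hiso : ∀ θ : EuclideanSpace ℝ (Fin (n + 1)), ‖θ‖ = 1 → ∫ x in K, ⟪x, θ⟫ ^ 2 = L ^ 2) :
    inertiaMatrix n K = L ^ 2 • 1 := by
  ext i j
  have hint (θ : EuclideanSpace ℝ (Fin (n + 1))) :
      Integrable (fun x => ⟪x, θ⟫ ^ 2) (volume.restrict K) :=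
    (by fun_prop : Continuous fun x => ⟪x, θ⟫ ^ 2).continuousOn.integrableOn_compact hK
  rw [inertiaMatrix, integral_inner_mul_inner_of_isotropic hint hiso]
  simp [EuclideanSpace.inner_single_left, Matrix.one_apply]

theorem inertiaMatrix_steiner (hK : IsCompact K)
    (hiso : ∀ θ : EuclideanSpace ℝ (Fin (n + 1)), ‖θ‖ = 1 → ∫ x in K, ⟪x, θ⟫ ^ 2 = L ^ 2) :
    inertiaMatrix n (steiner n K) = Matrix.diagonal
      (Fin.snoc (fun _ => L ^ 2) (∫ x in steiner n K, ⟪x, eLast n⟫ ^ 2)) := by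
  ext i j
  rw [inertiaMatrix_apply]
  induction i using Fin.lastCases with
  | last =>
    induction j using Fin.lastCases with
    | last => simp [inner_eLast, sq]
    | cast j =>
      simp [setIntegral_steiner_last_mul_castSucc hK, (Fin.castSucc_lt_last j).ne']
  | cast i =>
    induction j using Fin.lastCases with
    | last =>
      simpa [mul_comm, (Fin.castSucc_lt_last i).ne] using
        setIntegral_steiner_last_mul_castSucc hK i
    | cast j =>
      rw [setIntegral_steiner_castSucc_mul_castSucc hK, ← inertiaMatrix_apply,
        inertiaMatrix_of_isotropic hK hiso]
      simp [Matrix.one_apply, Matrix.diagonal_apply]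

theorem det_inertiaMatrix_steiner (hK : IsCompact K)
    (hiso : ∀ θ : EuclideanSpace ℝ (Fin (n + 1)), ‖θ‖ = 1 → ∫ x in K, ⟪x, θ⟫ ^ 2 = L ^ 2) :
    (inertiaMatrix n (steiner n K)).det
      = (L ^ 2) ^ n * ∫ x in steiner n K, ⟪x, eLast n⟫ ^ 2 := by
  simp [inertiaMatrix_steiner hK hiso, Matrix.det_diagonal, Fin.prod_univ_castSucc]

end Inertia

theorem rpow_one_div_two_mul_succ_of_eq_sq {d σ L : ℝ} (n : ℕ) (hσ : 0 ≤ σ) (hL : 0 ≤ L)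
    (hd : d = (σ * L ^ (n + 1)) ^ 2) :
    d ^ ((1 : ℝ) / (2 * (n + 1))) = σ ^ ((1 : ℝ) / (n + 1)) * L := by
  have hexp : ((2 : ℕ) : ℝ) * (1 / (2 * (n + 1))) = 1 / (n + 1) := by push_cast; field_simp
  rw [hd, ← Real.rpow_natCast, ← Real.rpow_mul (by positivity), hexp,
    Real.mul_rpow hσ (by positivity), one_div, ← Nat.cast_add_one,
    Real.pow_rpow_inv_natCast hL n.succ_ne_zero]

theorem isotropy_constant_of_steiner_symmetrization_general
    (n : ℕ) (K : Set (EuclideanSpace ℝ (Fin (n + 1)))) (L : ℝ) (hL : 0 < L)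
    (hcomp : IsCompact K)
    (hiso : ∀ θ : EuclideanSpace ℝ (Fin (n + 1)), ‖θ‖ = 1 → ∫ x in K, ⟪x, θ⟫ ^ 2 = L ^ 2)
    (σ : ℝ) (hσ : σ = Real.sqrt ((∫ x in steiner n K, ⟪x, eLast n⟫ ^ 2) / L ^ 2)) :
    (inertiaMatrix n (steiner n K)).det ^ ((1 : ℝ) / (2 * (n + 1)))
        = σ ^ ((1 : ℝ) / (n + 1)) * L ∧
    (inertiaMatrix n (steiner n K)).det ^ ((1 : ℝ) / (2 * (n + 1))) ≤ L := by
  have hI_le : ∫ x in steiner n K, ⟪x, eLast n⟫ ^ 2 ≤ L ^ 2 :=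
    (setIntegral_steiner_inner_eLast_sq_le hcomp).trans_eq (hiso _ (by simp [eLast]))
  have hσ_nonneg : 0 ≤ σ := hσ ▸ Real.sqrt_nonneg _
  have hσ_le_one : σ ≤ 1 := by
    rwa [hσ, Real.sqrt_le_one, div_le_one (by positivity)]
  have hI : ∫ x in steiner n K, ⟪x, eLast n⟫ ^ 2 = σ ^ 2 * L ^ 2 := by
    rw [hσ, Real.sq_sqrt (div_nonneg (integral_nonneg fun x => sq_nonneg _) (by positivity)),
      div_mul_cancel₀ _ (by positivity)]
  have hdet : (inertiaMatrix n (steiner n K)).det = (σ * L ^ (n + 1)) ^ 2 := by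
    rw [det_inertiaMatrix_steiner hcomp hiso, hI]
    ring
  have key := rpow_one_div_two_mul_succ_of_eq_sq n hσ_nonneg hL.le hdet
  exact ⟨key, key ▸ mul_le_of_le_one_left hL.le
    (Real.rpow_le_one hσ_nonneg hσ_le_one (by positivity))⟩

theorem isotropy_constant_of_steiner_symmetrization
    (n : ℕ) (K : Set (EuclideanSpace ℝ (Fin (n + 1)))) (L : ℝ) (hL : 0 < L)
    (hconv : Convex ℝ K) (hcomp : IsCompact K)
    (hvol : volume K = 1) (hbar : (∫ x in K, x) = 0)
    (hiso : ∀ θ : EuclideanSpace ℝ (Fin (n + 1)), ‖θ‖ = 1 → ∫ x in K, ⟪x, θ⟫ ^ 2 = L ^ 2)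
    (σ : ℝ) (hσ : σ = Real.sqrt ((∫ x in steiner n K, ⟪x, eLast n⟫ ^ 2) / L ^ 2)) :
    (inertiaMatrix n (steiner n K)).det ^ ((1 : ℝ) / (2 * (n + 1)))
        = σ ^ ((1 : ℝ) / (n + 1)) * L ∧
    (inertiaMatrix n (steiner n K)).det ^ ((1 : ℝ) / (2 * (n + 1))) ≤ L :=
  isotropy_constant_of_steiner_symmetrization_general n K L hL hcomp hiso σ hσ
end
end
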